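/- For every graph G, the independence number satisfies α(G) ≥ Σ_{v ∈ V(G)} 1/(d_G(v) + 1). -/

import Mathlib

open SimpleGraph Finset

lemma caro_wei_aux : ∀ (n : ℕ) {V : Type*} [Fintype V] (G : SimpleGraph V),
    Fintype.card V ≤ n →
    ∃ S : Finset V, (S : Set V).Pairwise (fun a b => ¬ G.Adj a b) ∧
      ∑ v : V, (1 : ℝ) / (Nat.card (G.neighborSet v) + 1) ≤ S.card := by
  intro n
  induction n with
  | zero =>
    intro V _ G hV
    haveI : IsEmpty V := Fintype.card_eq_zero_iff.mp (Nat.le_zero.mp hV)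
    exact ⟨∅, by simp, by simp⟩
  | succ n ih =>
    intro V _ G hV
    classical
    rcases isEmpty_or_nonempty V with hV0 | hV0
    · exact ⟨∅, by simp, by simp⟩
    -- pick a vertex of minimum "degree"
    obtain ⟨v, -, hv⟩ := Finset.exists_min_image (univ : Finset V)
      (fun u => Nat.card (G.neighborSet u)) ⟨Classical.arbitrary V, mem_univ _⟩
    set d : V → ℕ := fun u => Nat.card (G.neighborSet u) with hd
    have hdeg : ∀ u, d u = (G.neighborFinset u).card := by
      intro u
      simp [hd, Nat.card_eq_fintype_card, SimpleGraph.neighborFinset, Set.toFinset_card]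
    set NA : Finset V := insert v (G.neighborFinset v) with hNA
    have hvNA : v ∈ NA := mem_insert_self _ _
    have hNAcard : NA.card = d v + 1 := by
      rw [hNA, Finset.card_insert_of_notMem (G.notMem_neighborFinset_self v), hdeg]
    -- the induced graph on the complement of the closed neighborhood
    set G' : SimpleGraph ↥(NAᶜ : Finset V) := G.comap Subtype.val with hG'
    have hcard' : Fintype.card ↥(NAᶜ : Finset V) ≤ n := by
      have h1 : (NAᶜ : Finset V).card < Fintype.card V := by
        have hne : (NAᶜ : Finset V) ≠ univ := fun h => by
          have hv' : v ∈ (NAᶜ : Finset V) := h ▸ Finset.mem_univ v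
          exact (Finset.mem_compl.mp hv') hvNA
        simpa using Finset.card_lt_card (Finset.ssubset_univ_iff.mpr hne)
      have := Fintype.card_coe (NAᶜ : Finset V)
      omega
    obtain ⟨S', hS'ind, hS'sum⟩ := ih G' hcard'
    -- degrees only decrease
    have hdegle : ∀ u : ↥(NAᶜ : Finset V), Nat.card (G'.neighborSet u) ≤ d u.val := by
      intro u
      apply Nat.card_le_card_of_injective
        (fun w : G'.neighborSet u => (⟨w.val.val, w.prop⟩ : G.neighborSet u.val))
      intro a b hab
      simp only [Subtype.mk.injEq] at hab
      exact Subtype.ext (Subtype.ext (by have := congrArg Subtype.val hab; exact this))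
    -- build the independent set
    set T : Finset V := S'.image Subtype.val with hT
    have hvT : v ∉ T := by
      intro hvmem
      rw [hT, Finset.mem_image] at hvmem
      obtain ⟨w, -, hw⟩ := hvmem
      exact (Finset.mem_compl.mp w.prop) (hw ▸ hvNA)
    refine ⟨insert v T, ?_, ?_⟩
    · rw [Finset.coe_insert]
      rw [Set.pairwise_insert]
      refine ⟨?_, ?_⟩
      · intro a ha b hb hab
        rw [Finset.mem_coe, hT, Finset.mem_image] at ha hb
        obtain ⟨a', ha', rfl⟩ := ha
        obtain ⟨b', hb', rfl⟩ := hb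
        have : a' ≠ b' := fun h => hab (congrArg Subtype.val h)
        exact hS'ind ha' hb' this
      · intro b hb _
        rw [Finset.mem_coe, hT, Finset.mem_image] at hb
        obtain ⟨b', hb', rfl⟩ := hb
        have hbn : (b' : V) ∉ NA := Finset.mem_compl.mp b'.prop
        have h1 : ¬ G.Adj v b' := fun h => hbn (Finset.mem_insert_of_mem
          ((G.mem_neighborFinset v b').mpr h))
        exact ⟨h1, fun h => h1 (G.adj_symm h)⟩
    · -- sum bound
      have hsplit : ∑ u : V, (1 : ℝ) / (d u + 1)
          = ∑ u ∈ NA, (1 : ℝ) / (d u + 1) + ∑ u ∈ NAᶜ, (1 : ℝ) / (d u + 1) := by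
        rw [← Finset.sum_add_sum_compl NA]
      have h1 : ∑ u ∈ NA, (1 : ℝ) / (d u + 1) ≤ 1 := by
        have : ∀ u ∈ NA, (1 : ℝ) / (d u + 1) ≤ 1 / (d v + 1) := by
          intro u _
          apply one_div_le_one_div_of_le
          · positivity
          · have := hv u (mem_univ u)
            linarith [(Nat.cast_le (α := ℝ)).mpr this]
        calc ∑ u ∈ NA, (1 : ℝ) / (d u + 1) ≤ ∑ _u ∈ NA, (1 : ℝ) / (d v + 1) :=
              Finset.sum_le_sum this
          _ = (d v + 1) * ((1 : ℝ) / (d v + 1)) := by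
              rw [Finset.sum_const, hNAcard]; push_cast; ring
          _ = 1 := by
              field_simp
      have h2 : ∑ u ∈ NAᶜ, (1 : ℝ) / (d u + 1) ≤ S'.card := by
        calc ∑ u ∈ NAᶜ, (1 : ℝ) / (d u + 1)
            = ∑ u : ↥(NAᶜ : Finset V), (1 : ℝ) / (d u.val + 1) := by
              rw [Finset.univ_eq_attach, ← Finset.sum_attach NAᶜ (fun u => (1:ℝ)/(d u + 1))]
          _ ≤ ∑ u : ↥(NAᶜ : Finset V), (1 : ℝ) / (Nat.card (G'.neighborSet u) + 1) := by
              apply Finset.sum_le_sum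
              intro u _
              apply one_div_le_one_div_of_le
              · positivity
              · have := hdegle u
                linarith [(Nat.cast_le (α := ℝ)).mpr this]
          _ ≤ S'.card := hS'sum
      have hcardS : ((insert v T).card : ℝ) = S'.card + 1 := by
        rw [Finset.card_insert_of_notMem hvT, hT,
          Finset.card_image_of_injective _ Subtype.val_injective]
        push_cast; ring
      rw [hcardS]
      calc ∑ u : V, (1 : ℝ) / (d u + 1) ≤ 1 + S'.card := by rw [hsplit]; linarith
        _ = S'.card + 1 := by ring

/-- The independence number of a graph. -/
noncomputable def indNum {V : Type*} (G : SimpleGraph V) : ℕ :=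
  sSup {n | ∃ S : Set V, S.Pairwise (fun a b => ¬ G.Adj a b) ∧ n = S.ncard}

/-- Caro–Wei: `α(G) ≥ Σ_v 1/(d(v) + 1)`. -/
theorem caro_wei {V : Type*} [Fintype V] (G : SimpleGraph V) :
    ∑ v : V, (1 : ℝ) / (Nat.card (G.neighborSet v) + 1) ≤ indNum G := by
  obtain ⟨S, hSind, hSsum⟩ := caro_wei_aux (Fintype.card V) G le_rfl
  have hmem : S.card ∈ {n | ∃ T : Set V, T.Pairwise (fun a b => ¬ G.Adj a b) ∧ n = T.ncard} :=
    ⟨(S : Set V), hSind, (Set.ncard_coe_finset S).symm⟩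
  have hbdd : BddAbove {n | ∃ T : Set V, T.Pairwise (fun a b => ¬ G.Adj a b) ∧ n = T.ncard} := by
    refine ⟨Fintype.card V, fun n hn => ?_⟩
    obtain ⟨T, -, rfl⟩ := hn
    calc T.ncard ≤ (Set.univ : Set V).ncard :=
          Set.ncard_le_ncard (Set.subset_univ T) Set.finite_univ
      _ = Fintype.card V := by simp [Set.ncard_univ, Nat.card_eq_fintype_card]
  have : S.card ≤ indNum G := le_csSup hbdd hmem
  calc ∑ v : V, (1 : ℝ) / (Nat.card (G.neighborSet v) + 1) ≤ S.card := hSsum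
    _ ≤ indNum G := Nat.cast_le.mpr this
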